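/- Let 𝒜 be a finite, central, essential, simplicial real arrangement. Let F ⊆ F′ be two faces of Z(𝒜), let B be the subspace dual to F, and let y be a vertex of F. Then the morphism Δ^y(F′)(Δ^y(F))⁻¹ is equivalent to a concatenation of elementary B-segments. -/

import Mathlib

open scoped Classical

noncomputable section

namespace DelGrpd

variable {A : Type} [NormedAddCommGroup A] [InnerProductSpace ℝ A] [FiniteDimensional ℝ A]

/-- A finite, central, essential arrangement of linear hyperplanes in the real vector
space `A`. -/
structure RealArr (A : Type) [NormedAddCommGroup A] [InnerProductSpace ℝ A]
    [FiniteDimensional ℝ A] where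
  hyps : Finset (Submodule ℝ A)
  coatoms : ∀ H ∈ hyps, IsCoatom H
  essential : hyps.inf id = ⊥

/-- The complement of the arrangement. -/
def cmpl (𝒜 : RealArr A) : Set A := {x | ∀ H ∈ 𝒜.hyps, x ∉ H}

/-- A chamber: a connected component of the complement. -/
def IsChamber (𝒜 : RealArr A) (C : Set A) : Prop :=
  ∃ x ∈ cmpl 𝒜, C = connectedComponentIn (cmpl 𝒜) x

/-- The type of chambers of `𝒜`. -/
def Chamber (𝒜 : RealArr A) : Type := {C : Set A // IsChamber 𝒜 C}

/-- The arrangement is simplicial: every chamber is an open simplicial cone. -/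
def Simplicial (𝒜 : RealArr A) : Prop :=
  ∀ C : Set A, IsChamber 𝒜 C →
    ∃ f : Fin (Module.finrank ℝ A) → (A →ₗ[ℝ] ℝ),
      LinearIndependent ℝ f ∧ C = {x | ∀ i, 0 < f i x}

/-- The arrangement is irreducible (not a nontrivial direct sum). -/
def Irred (𝒜 : RealArr A) : Prop :=
  ¬ ∃ V₁ V₂ : Submodule ℝ A, IsCompl V₁ V₂ ∧ V₁ ≠ ⊥ ∧ V₂ ≠ ⊥ ∧
    ∀ H ∈ 𝒜.hyps, V₁ ≤ H ∨ V₂ ≤ H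

/-- The hyperplane `H` separates the sets `C` and `D`. -/
def Separates (H : Submodule ℝ A) (C D : Set A) : Prop :=
  ∃ f : A →ₗ[ℝ] ℝ, LinearMap.ker f = H ∧ (∀ x ∈ C, 0 < f x) ∧ (∀ x ∈ D, f x < 0)

/-- Two chambers are adjacent when exactly one hyperplane of `𝒜` separates them. -/
def Adj (𝒜 : RealArr A) (C D : Chamber 𝒜) : Prop :=
  ∃! H : Submodule ℝ A, H ∈ 𝒜.hyps ∧ Separates H C.1 D.1

/-- A step of an edge path in the graph `Γ(𝒜)`: an arrow of `Γ(𝒜)` traversed either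
positively or negatively (formal inverse). -/
inductive Step (𝒜 : RealArr A) : Chamber 𝒜 → Chamber 𝒜 → Type
  | pos {x y : Chamber 𝒜} (h : Adj 𝒜 x y) : Step 𝒜 x y
  | neg {x y : Chamber 𝒜} (h : Adj 𝒜 y x) : Step 𝒜 x y

/-- The sign of a step. -/
def Step.sign {𝒜 : RealArr A} {x y : Chamber 𝒜} : Step 𝒜 x y → ℤ
  | .pos _ => 1
  | .neg _ => -1

/-- Reversal of a step. -/
def Step.symm {𝒜 : RealArr A} {x y : Chamber 𝒜} : Step 𝒜 x y → Step 𝒜 y x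
  | .pos h => .neg h
  | .neg h => .pos h

/-- Edge paths in `Γ(𝒜)` (words in the arrows and their formal inverses). -/
inductive Path (𝒜 : RealArr A) : Chamber 𝒜 → Chamber 𝒜 → Type
  | nil (x : Chamber 𝒜) : Path 𝒜 x x
  | cons {x y z : Chamber 𝒜} (s : Step 𝒜 x y) (p : Path 𝒜 y z) : Path 𝒜 x z

namespace Path

variable {𝒜 : RealArr A}

/-- Concatenation of paths. -/
def comp : {x y z : Chamber 𝒜} → Path 𝒜 x y → Path 𝒜 y z → Path 𝒜 x z
  | _, _, _, .nil _, q => q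
  | _, _, _, .cons s p, q => .cons s (comp p q)

/-- The inverse path. -/
def inv : {x y : Chamber 𝒜} → Path 𝒜 x y → Path 𝒜 y x
  | _, _, .nil x => .nil x
  | _, _, .cons s p => comp (inv p) (.cons s.symm (.nil _))

/-- The length of a path. -/
def length : {x y : Chamber 𝒜} → Path 𝒜 x y → ℕ
  | _, _, .nil _ => 0
  | _, _, .cons _ p => length p + 1

/-- A path is positive when all of its steps are positive. -/
def Positive : {x y : Chamber 𝒜} → Path 𝒜 x y → Prop
  | _, _, .nil _ => True
  | _, _, .cons (.pos _) p => Positive p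
  | _, _, .cons (.neg _) _ => False

/-- A path is minimal when no path with the same endpoints is shorter. -/
def Minimal {x y : Chamber 𝒜} (p : Path 𝒜 x y) : Prop :=
  ∀ q : Path 𝒜 x y, p.length ≤ q.length

@[simp] theorem nil_comp {x y : Chamber 𝒜} (p : Path 𝒜 x y) : comp (.nil x) p = p := rfl

@[simp] theorem comp_nil {x y : Chamber 𝒜} (p : Path 𝒜 x y) : comp p (.nil y) = p := by
  induction p with
  | nil _ => rfl
  | cons s p ih => simp [comp, ih]

theorem comp_assoc {w x y z : Chamber 𝒜} (p : Path 𝒜 w x) (q : Path 𝒜 x y) (r : Path 𝒜 y z) :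
    comp (comp p q) r = comp p (comp q r) := by
  induction p with
  | nil _ => rfl
  | cons s p ih => simp [comp, ih]

@[simp] theorem step_symm_symm {x y : Chamber 𝒜} (s : Step 𝒜 x y) : s.symm.symm = s := by
  cases s <;> rfl

theorem inv_comp {x y z : Chamber 𝒜} (p : Path 𝒜 x y) (q : Path 𝒜 y z) :
    inv (comp p q) = comp (inv q) (inv p) := by
  induction p with
  | nil _ => simp [inv]
  | cons s p ih => simp [comp, inv, ih, comp_assoc]

@[simp] theorem inv_inv {x y : Chamber 𝒜} (p : Path 𝒜 x y) : inv (inv p) = p := by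
  induction p with
  | nil _ => rfl
  | cons s p ih =>
      show inv (comp (inv p) (.cons s.symm (.nil _))) = _
      rw [inv_comp, ih]
      simp [inv, comp]

end Path

/-- Equivalence of edge paths: the smallest equivalence relation such that (a) `p ⬝ p⁻¹` is
equivalent to the constant path, (b) it is closed under inversion, (c) it is preserved by
pre- and post-concatenation, and (d) any two minimal positive paths with the same endpoints
are equivalent. -/
inductive Rel (𝒜 : RealArr A) : {x y : Chamber 𝒜} → Path 𝒜 x y → Path 𝒜 x y → Prop
  | refl {x y : Chamber 𝒜} (p : Path 𝒜 x y) : Rel 𝒜 p p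
  | symm {x y : Chamber 𝒜} {p q : Path 𝒜 x y} : Rel 𝒜 p q → Rel 𝒜 q p
  | trans {x y : Chamber 𝒜} {p q r : Path 𝒜 x y} : Rel 𝒜 p q → Rel 𝒜 q r → Rel 𝒜 p r
  | cancel {x y : Chamber 𝒜} (p : Path 𝒜 x y) : Rel 𝒜 (p.comp p.inv) (Path.nil x)
  | inv {x y : Chamber 𝒜} {p q : Path 𝒜 x y} : Rel 𝒜 p q → Rel 𝒜 p.inv q.inv
  | congr_left {w x y : Chamber 𝒜} (h : Path 𝒜 w x) {p q : Path 𝒜 x y} :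
      Rel 𝒜 p q → Rel 𝒜 (h.comp p) (h.comp q)
  | congr_right {x y z : Chamber 𝒜} (h : Path 𝒜 y z) {p q : Path 𝒜 x y} :
      Rel 𝒜 p q → Rel 𝒜 (p.comp h) (q.comp h)
  | minpos {x y : Chamber 𝒜} (p q : Path 𝒜 x y) :
      p.Positive → q.Positive → p.Minimal → q.Minimal → Rel 𝒜 p q

instance pathSetoid (𝒜 : RealArr A) (x y : Chamber 𝒜) : Setoid (Path 𝒜 x y) :=
  ⟨Rel 𝒜, ⟨Rel.refl, Rel.symm, Rel.trans⟩⟩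

/-- Morphisms of the Deligne groupoid `G(𝒜)`: equivalence classes of edge paths. -/
def Mor (𝒜 : RealArr A) (x y : Chamber 𝒜) : Type := Quotient (pathSetoid 𝒜 x y)

namespace Mor

variable {𝒜 : RealArr A}

/-- Composition of morphisms of the Deligne groupoid. -/
def comp {x y z : Chamber 𝒜} : Mor 𝒜 x y → Mor 𝒜 y z → Mor 𝒜 x z :=
  Quotient.lift₂ (fun p q => (⟦p.comp q⟧ : Mor 𝒜 x z))
    (fun _ _ _ _ hp hq =>
      Quotient.sound ((Rel.congr_right _ hp).trans (Rel.congr_left _ hq)))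

/-- Inversion of morphisms of the Deligne groupoid. -/
def symm {x y : Chamber 𝒜} : Mor 𝒜 x y → Mor 𝒜 y x :=
  Quotient.map Path.inv (fun _ _ h => Rel.inv h)

@[simp] theorem comp_mk {x y z : Chamber 𝒜} (p : Path 𝒜 x y) (q : Path 𝒜 y z) :
    comp (⟦p⟧ : Mor 𝒜 x y) ⟦q⟧ = ⟦p.comp q⟧ := rfl

/-- A positive morphism: one represented by a positive path. -/
def Pos {x y : Chamber 𝒜} (φ : Mor 𝒜 x y) : Prop :=
  ∃ p : Path 𝒜 x y, p.Positive ∧ φ = ⟦p⟧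

/-- The identity morphisms (possibly after identification of the endpoints): morphisms
represented by a path of length zero. -/
def IsId {x y : Chamber 𝒜} (φ : Mor 𝒜 x y) : Prop :=
  ∃ p : Path 𝒜 x y, p.length = 0 ∧ φ = ⟦p⟧

end Mor

/-- The isotropy group of the Deligne groupoid at the chamber `x`. -/
instance morGroup (𝒜 : RealArr A) (x : Chamber 𝒜) : Group (Mor 𝒜 x x) where
  mul := Mor.comp
  one := (⟦Path.nil x⟧ : Mor 𝒜 x x)
  inv := Mor.symm
  mul_assoc a b c := by
    refine Quotient.inductionOn₃ a b c fun p q r => ?_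
    show (⟦(p.comp q).comp r⟧ : Mor 𝒜 x x) = ⟦p.comp (q.comp r)⟧
    rw [Path.comp_assoc]
  one_mul a := by
    refine Quotient.inductionOn a fun p => ?_
    show (⟦(Path.nil x).comp p⟧ : Mor 𝒜 x x) = ⟦p⟧
    rw [Path.nil_comp]
  mul_one a := by
    refine Quotient.inductionOn a fun p => ?_
    show (⟦p.comp (Path.nil x)⟧ : Mor 𝒜 x x) = ⟦p⟧
    rw [Path.comp_nil]
  inv_mul_cancel a := by
    refine Quotient.inductionOn a fun p => ?_
    show (⟦p.inv.comp p⟧ : Mor 𝒜 x x) = ⟦Path.nil x⟧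
    have h := Rel.cancel (𝒜 := 𝒜) p.inv
    rw [Path.inv_inv] at h
    exact Quotient.sound h

/-- The prefix order on morphisms: `f ≼ g` iff `g = f ⬝ h` for a positive `h`. -/
def prefixLe {𝒜 : RealArr A} {x y z : Chamber 𝒜} (f : Mor 𝒜 x y) (g : Mor 𝒜 x z) : Prop :=
  ∃ h : Mor 𝒜 y z, h.Pos ∧ g = f.comp h

/-- The suffix order on morphisms: `f` is a suffix of `g` iff `g = h ⬝ f` for a positive `h`. -/
def suffixLe {𝒜 : RealArr A} {x y z : Chamber 𝒜} (f : Mor 𝒜 y z) (g : Mor 𝒜 x z) : Prop :=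
  ∃ h : Mor 𝒜 x y, h.Pos ∧ g = h.comp f

end DelGrpd

namespace DelGrpd

variable {A : Type} [NormedAddCommGroup A] [InnerProductSpace ℝ A] [FiniteDimensional ℝ A]

/-- A face of the dual zonotope `Z(𝒜)`, encoded by the corresponding cone of the fan of `𝒜`:
the face is dual to the subspace `B ∈ Q̂(𝒜)` and corresponds to the connected component `c`
of `B` minus the hyperplanes not containing `B`. -/
structure Face (𝒜 : RealArr A) where
  B : Submodule ℝ A
  c : Set A
  hB : ∃ S : Finset (Submodule ℝ A), S ⊆ 𝒜.hyps ∧ B = S.inf id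
  hc : ∃ x : A, x ∈ B ∧ (∀ H ∈ 𝒜.hyps, ¬ B ≤ H → x ∉ H) ∧
    c = connectedComponentIn {y : A | y ∈ B ∧ ∀ H ∈ 𝒜.hyps, ¬ B ≤ H → y ∉ H} x

variable {𝒜 : RealArr A}

/-- The chamber `v` is a vertex of the face `F`. -/
def Face.vert (F : Face 𝒜) (v : Chamber 𝒜) : Prop := F.c ⊆ closure v.1


section Paths

variable {𝒜 : RealArr A}

/-- All chambers visited by the path are vertices of the face `F` (see `Face.vert`);
i.e. the image of the path under `π` is contained in `F`. -/
def Path.InFace (F : Face 𝒜) : {x y : Chamber 𝒜} → Path 𝒜 x y → Prop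
  | x, _, .nil _ => F.vert x
  | x, _, .cons _ p => F.vert x ∧ Path.InFace F p

/-- The path crosses the hyperplane `H` (some step of it is dual to `H`). -/
def Path.Crosses (H : Submodule ℝ A) : {x y : Chamber 𝒜} → Path 𝒜 x y → Prop
  | _, _, .nil _ => False
  | _, _, @Path.cons _ _ _ _ _ x y _ _ p => Separates H x.1 y.1 ∨ Path.Crosses H p

/-- The signed intersection number of a path with the hyperplane `H`: the sum of the signs
of the steps dual to `H`. -/
def Path.icount (H : Submodule ℝ A) : {x y : Chamber 𝒜} → Path 𝒜 x y → ℤ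
  | _, _, .nil _ => 0
  | _, _, @Path.cons _ _ _ _ _ x y _ s p =>
      (if Separates H x.1 y.1 then s.sign else 0) + Path.icount H p

end Paths


/-- Containment of faces of the zonotope (every vertex of `F` is a vertex of `F'`). -/
def Face.le (F F' : Face 𝒜) : Prop := ∀ v : Chamber 𝒜, F.vert v → F'.vert v

/-- A proper face of `Z(𝒜)`: neither a vertex nor the whole zonotope. -/
def Face.Proper (F : Face 𝒜) : Prop := F.B ≠ ⊤ ∧ F.B ≠ ⊥

/-- The face `F` is irreducible, i.e. the normal arrangement `𝒜_{A/B}` of its dual subspace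
`B` does not decompose as a nontrivial direct sum. -/
def Face.Irr (F : Face 𝒜) : Prop :=
  ¬ ∃ W₁ W₂ : Submodule ℝ A, F.B ≤ W₁ ∧ F.B ≤ W₂ ∧ W₁ ⊓ W₂ = F.B ∧ W₁ ⊔ W₂ = ⊤ ∧
    W₁ ≠ F.B ∧ W₂ ≠ F.B ∧ ∀ H ∈ 𝒜.hyps, F.B ≤ H → (W₁ ≤ H ∨ W₂ ≤ H)

/-- `H` is dual to an edge of the face `F`. -/
def DualEdge (F : Face 𝒜) (H : Submodule ℝ A) : Prop :=
  H ∈ 𝒜.hyps ∧ ∃ v w : Chamber 𝒜, F.vert v ∧ F.vert w ∧ Adj 𝒜 v w ∧ Separates H v.1 w.1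

/-- `y = Ant(x, F)`, the antipodal vertex of `x` in the face `F`: the vertex of `F`
separated from `x` by exactly the hyperplanes dual to the edges of `F` (equivalently, by
exactly the hyperplanes containing the dual subspace `B` of `F`). -/
def IsAnt (F : Face 𝒜) (x y : Chamber 𝒜) : Prop :=
  F.vert x ∧ F.vert y ∧ ∀ H ∈ 𝒜.hyps, (F.B ≤ H ↔ Separates H x.1 y.1)

/-- `v = proj_F x`, the vertex of `F` of minimal distance to `x` in the `1`-skeleton of
`Z(𝒜)`. -/
def IsProj (F : Face 𝒜) (x v : Chamber 𝒜) : Prop :=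
  F.vert v ∧ ∀ w : Chamber 𝒜, F.vert w → ∀ q : Path 𝒜 x w,
    ∃ p : Path 𝒜 x v, p.length ≤ q.length

/-- `φ = Δ_x(F)` (equivalently `Δ^{Ant(x,F)}(F)`): the Garside morphism of the face `F`,
represented by a minimal positive path from `x` to `Ant(x, F)` inside `F`. -/
def IsGarside (F : Face 𝒜) {x y : Chamber 𝒜} (φ : Mor 𝒜 x y) : Prop :=
  IsAnt F x y ∧ ∃ p : Path 𝒜 x y, p.Positive ∧ p.Minimal ∧ p.InFace F ∧ φ = ⟦p⟧

/-- `x' = p(x)` where `p : F → F'` is the parallel translation between the parallel faces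
`F` and `F'`: `x'` is the vertex of `F'` not separated from `x` by any hyperplane
containing the common dual subspace `B`. -/
def ParTrans (F F' : Face 𝒜) (x x' : Chamber 𝒜) : Prop :=
  F.B = F'.B ∧ F.vert x ∧ F'.vert x' ∧
    ∀ H ∈ 𝒜.hyps, F.B ≤ H → ¬ Separates H x.1 x'.1

/-- The parallel faces `F` and `F'` are adjacent: they are distinct, dual to the same
subspace, and contained in a common face of one higher dimension. -/
def AdjFaces (F F' : Face 𝒜) : Prop :=
  F ≠ F' ∧ F.B = F'.B ∧ ∃ F₀ : Face 𝒜, F.le F₀ ∧ F'.le F₀ ∧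
    Module.finrank ℝ F.B = Module.finrank ℝ F₀.B + 1

/-- `φ` is an `(F, F')`-elementary `B`-segment: `F` and `F'` are adjacent parallel faces
dual to `B` and `φ` is represented by a minimal positive path from a vertex `x ∈ F` to the
parallel translate `p(x) ∈ F'`. -/
def IsElemSeg (F F' : Face 𝒜) {x x' : Chamber 𝒜} (φ : Mor 𝒜 x x') : Prop :=
  AdjFaces F F' ∧ ParTrans F F' x x' ∧
    ∃ p : Path 𝒜 x x', p.Positive ∧ p.Minimal ∧ φ = ⟦p⟧

/-- `φ` is an elementary `Bs`-segment (for some pair of adjacent parallel faces dual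
to `Bs`). -/
def IsElemSegB (Bs : Submodule ℝ A) {x x' : Chamber 𝒜} (φ : Mor 𝒜 x x') : Prop :=
  ∃ F F' : Face 𝒜, F.B = Bs ∧ IsElemSeg F F' φ

/-- `φ` is a (possibly empty) concatenation of elementary `Bs`-segments. -/
inductive IsElemComp (𝒜 : RealArr A) (Bs : Submodule ℝ A) :
    {x y : Chamber 𝒜} → Mor 𝒜 x y → Prop
  | nil (x : Chamber 𝒜) : IsElemComp 𝒜 Bs (⟦Path.nil x⟧ : Mor 𝒜 x x)
  | single {x y : Chamber 𝒜} (φ : Mor 𝒜 x y) : IsElemSegB Bs φ → IsElemComp 𝒜 Bs φ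
  | comp {x y z : Chamber 𝒜} (φ : Mor 𝒜 x y) (ψ : Mor 𝒜 y z) :
      IsElemComp 𝒜 Bs φ → IsElemComp 𝒜 Bs ψ → IsElemComp 𝒜 Bs (φ.comp ψ)

/-- `z = 𝒵_F`, the standard Dehn twist of the face `F` with respect to the base chamber
`x₀`: `z = h_F (Δ_{x_F}(F))² h_F⁻¹`, where `x_F = proj_F x₀` and `h_F` is (the class of) a
minimal positive path from `x₀` to `x_F`. -/
def IsDehnTwist (x₀ : Chamber 𝒜) (F : Face 𝒜) (z : Mor 𝒜 x₀ x₀) : Prop :=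
  ∃ (v y : Chamber 𝒜) (h : Mor 𝒜 x₀ v) (δ : Mor 𝒜 v y) (δ' : Mor 𝒜 y v),
    IsProj F x₀ v ∧
    (∃ p : Path 𝒜 x₀ v, p.Positive ∧ p.Minimal ∧ h = ⟦p⟧) ∧
    IsGarside F δ ∧ IsGarside F δ' ∧
    z = h.comp (δ.comp (δ'.comp h.symm))

/-- `Z` is a standard `ℤ`-subgroup of the isotropy group `G_{x₀}` of the Deligne groupoid:
a conjugate of the cyclic subgroup generated by the standard Dehn twist of a proper
irreducible face. -/
def IsStdZSubgroup (x₀ : Chamber 𝒜) (Z : Subgroup (Mor 𝒜 x₀ x₀)) : Prop :=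
  ∃ (F : Face 𝒜) (z g : Mor 𝒜 x₀ x₀), F.Proper ∧ F.Irr ∧ IsDehnTwist x₀ F z ∧
    Z = Subgroup.zpowers (g * z * g⁻¹)

/-- The geometric realization of an abstract simplicial complex `K` on the vertex set `α`
(the faces are the nonempty finite sets belonging to `K`). -/
def realization {α : Type*} (K : Set (Finset α)) : Type _ :=
  {f : α → ℝ // (∀ a, 0 ≤ f a) ∧ (∃ s ∈ K, ∀ a, f a ≠ 0 → a ∈ s) ∧ ∑ᶠ a, f a = 1}

instance {α : Type*} (K : Set (Finset α)) : TopologicalSpace (realization K) :=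
  instTopologicalSpaceSubtype

end DelGrpd

/-!
Let `a = Ant(y, F)` and `a' = Ant(y, F')`. A hyperplane containing `B = F.B` contains `F'.B`, so
it separates both `a` and `a'` from `y`; hence a minimal positive path `a' → a` followed by
`Δ^y(F)` is minimal positive, i.e. represents `Δ^y(F')`, and the morphism in question is the
minimal positive morphism `a' → a`.

Off the hyperplanes containing `B`, the chamber `a'` has the signs of a point `z ∈ B` just beyond
`F'` as seen from `F`, and `a` those of `F`. Walk from `z` to `F` along a generic segment of `B`:
the walls of the restriction of `𝒜` to `B` are crossed a codimension-one face at a time, and each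
crossing goes between two adjacent faces parallel to `F`, contributing an elementary
`B`-segment. The separating sets of consecutive segments are disjoint, so their concatenation is
again minimal positive, hence equivalent to the path `a' → a`.
-/

namespace DelGrpd

open Filter Topology

def SameSign (a b : ℝ) : Prop := 0 < a * b

namespace SameSign

variable {a b c : ℝ}

theorem symm (h : SameSign a b) : SameSign b a := by
  rwa [SameSign, mul_comm]

theorem comm : SameSign a b ↔ SameSign b a := ⟨symm, symm⟩

theorem ne_zero_left (h : SameSign a b) : a ≠ 0 := by
  rintro rfl; simp [SameSign] at h

theorem ne_zero_right (h : SameSign a b) : b ≠ 0 := h.symm.ne_zero_left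

theorem trans (h₁ : SameSign a b) (h₂ : SameSign b c) : SameSign a c := by
  have := mul_pos h₁ h₂
  have : 0 < b * b := mul_self_pos.mpr h₁.ne_zero_right
  unfold SameSign; nlinarith

theorem congr {a' b' : ℝ} (ha : SameSign a a') (hb : SameSign b b') :
    SameSign a b ↔ SameSign a' b' :=
  ⟨fun h => ha.symm.trans (h.trans hb), fun h => ha.trans (h.trans hb.symm)⟩

theorem of_not_of_not (h₁ : ¬ SameSign a c) (h₂ : ¬ SameSign b c) (ha : a ≠ 0) (hb : b ≠ 0)
    (hc : c ≠ 0) : SameSign a b := by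
  have hac : a * c < 0 := (not_lt.mp h₁).lt_of_ne (mul_ne_zero ha hc)
  have hbc : b * c < 0 := (not_lt.mp h₂).lt_of_ne (mul_ne_zero hb hc)
  have : 0 < c * c := mul_self_pos.mpr hc
  have := mul_pos_of_neg_of_neg hac hbc
  unfold SameSign; nlinarith

theorem neg_left_of_not (h : ¬ SameSign a b) (ha : a ≠ 0) (hb : b ≠ 0) : SameSign (-a) b := by
  have : a * b < 0 := (not_lt.mp h).lt_of_ne (mul_ne_zero ha hb)
  unfold SameSign; linarith

end SameSign

theorem sameSign_self {a : ℝ} (h : a ≠ 0) : SameSign a a := mul_self_pos.mpr h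

theorem sameSign_mul_left {b : ℝ} (hb : b ≠ 0) {ε : ℝ} (hε : 0 < ε) : SameSign (ε * b) b := by
  unfold SameSign; nlinarith [mul_self_pos.mpr hb]

theorem isOpen_setOf_sameSign {X ι : Type*} [TopologicalSpace X] (T : Finset ι)
    (φ : ι → X → ℝ) (hφ : ∀ i, Continuous (φ i)) (c : ι → ℝ) :
    IsOpen {x | ∀ i ∈ T, SameSign (φ i x) (c i)} := by
  simp only [Set.ofPred_forall]
  exact isOpen_biInter_finset fun i _ => isOpen_lt continuous_const ((hφ i).mul continuous_const)

theorem eventually_sameSign_add_mul {α : ℝ} (hα : α ≠ 0) (β : ℝ) :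
    ∀ᶠ ε in 𝓝 0, SameSign (α + ε * β) α := by
  have hcont : Continuous fun ε : ℝ => (α + ε * β) * α := by fun_prop
  exact continuousAt_const.eventually_lt hcont.continuousAt (by simpa using mul_self_pos.mpr hα)

theorem add_mul_sub_eq {α β : ℝ} (h : α ≠ β) (s : ℝ) :
    α + s * (β - α) = (α - β) * (α / (α - β) - s) := by
  field_simp [sub_ne_zero.mpr h]; ring

/-- The line `s ↦ α + s (β - α)` vanishes at `t = α / (α - β)`: its signs at `s` and `s'` agree
iff `s` and `s'` lie on the same side of `t`. -/
theorem sameSign_add_mul_sub_iff {α β : ℝ} (h : α ≠ β) (s s' : ℝ) :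
    SameSign (α + s * (β - α)) (α + s' * (β - α)) ↔
      0 < (α / (α - β) - s) * (α / (α - β) - s') := by
  rw [SameSign, add_mul_sub_eq h, add_mul_sub_eq h, mul_mul_mul_comm,
    mul_pos_iff_of_pos_left (mul_self_pos.mpr (sub_ne_zero.mpr h))]

theorem sameSign_add_mul_sub_iff_left {α β : ℝ} (h : α ≠ β) (s : ℝ) :
    SameSign (α + s * (β - α)) α ↔ 0 < (α / (α - β) - s) * (α / (α - β)) := by
  simpa using sameSign_add_mul_sub_iff h s 0

theorem sameSign_add_mul_sub_iff_right {α β : ℝ} (h : α ≠ β) (s : ℝ) :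
    SameSign (α + s * (β - α)) β ↔ 0 < (α / (α - β) - s) * (α / (α - β) - 1) := by
  simpa using sameSign_add_mul_sub_iff h s 1

theorem sameSign_add_mul_sub_of_sameSign {α β s : ℝ} (h : SameSign α β) (hs₀ : 0 ≤ s)
    (hs₁ : s ≤ 1) : SameSign (α + s * (β - α)) α := by
  have hα : 0 < α * α := mul_self_pos.mpr h.ne_zero_left
  have hαβ : 0 < α * β := h
  unfold SameSign
  rcases le_total (α * α) (α * β) with hle | hle <;>
    nlinarith [mul_nonneg hs₀ (sub_nonneg.mpr hle), mul_nonneg (sub_nonneg.mpr hs₁)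
      (sub_nonneg.mpr hle)]

theorem div_sub_mem_Ioo_of_not_sameSign {α β : ℝ} (hα : α ≠ 0) (hβ : β ≠ 0)
    (h : ¬ SameSign α β) : α / (α - β) ∈ Set.Ioo 0 1 := by
  have hαβ : α * β < 0 := (not_lt.mp h).lt_of_ne (mul_ne_zero hα hβ)
  rcases mul_neg_iff.mp hαβ with ⟨hα, hβ⟩ | ⟨hα, hβ⟩
  · exact ⟨div_pos hα (by linarith), (div_lt_one (by linarith)).mpr (by linarith)⟩
  · exact ⟨div_pos_of_neg_of_neg hα (by linarith),
      (div_lt_one_of_neg (by linarith)).mpr (by linarith)⟩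

section FirstCrossing

variable {J : Type*} (S : Finset J) (α β : J → ℝ)

/-- Among the lines `s ↦ α j + s (β j - α j)` whose endpoints have opposite signs, those of `W`
vanish first, at `t₁`; just after it, at `s₀`, exactly these lines have changed sign. -/
theorem exists_first_crossing (hα : ∀ j ∈ S, α j ≠ 0) (hβ : ∀ j ∈ S, β j ≠ 0)
    (hD : (S.filter fun j => ¬ SameSign (α j) (β j)).Nonempty) :
    ∃ t₁ s₀ : ℝ, 0 < t₁ ∧ ∃ W ⊆ S.filter (fun j => ¬ SameSign (α j) (β j)), W.Nonempty ∧
      (∀ j ∈ W, α j + t₁ * (β j - α j) = 0) ∧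
      (∀ j ∈ S, j ∉ W → SameSign (α j + t₁ * (β j - α j)) (α j) ∧
        SameSign (α j + s₀ * (β j - α j)) (α j)) ∧
      (∀ j ∈ W, SameSign (α j + s₀ * (β j - α j)) (β j)) := by
  set D := S.filter fun j => ¬ SameSign (α j) (β j)
  set t : J → ℝ := fun j => α j / (α j - β j)
  have hDt : ∀ j ∈ D, α j ≠ β j ∧ t j ∈ Set.Ioo 0 1 := fun j hj => by
    obtain ⟨hjS, hj⟩ := Finset.mem_filter.mp hj
    exact ⟨fun h => hj (h ▸ sameSign_self (hα j hjS)),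
      div_sub_mem_Ioo_of_not_sameSign (hα j hjS) (hβ j hjS) hj⟩
  obtain ⟨j₁, hj₁D, hj₁min⟩ := D.exists_min_image t hD
  set t₁ := t j₁
  have ht₁ := (hDt j₁ hj₁D).2
  set W := D.filter fun j => t j = t₁
  set M := insert 1 ((D.filter fun j => t₁ < t j).image t)
  set m := M.min' (Finset.insert_nonempty _ _)
  have ht₁m : t₁ < m := by
    refine (Finset.lt_min'_iff _ _).mpr fun r hr => ?_
    rcases Finset.mem_insert.mp hr with rfl | hr
    · exact ht₁.2
    · obtain ⟨j, hj, rfl⟩ := Finset.mem_image.mp hr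
      exact (Finset.mem_filter.mp hj).2
  have hm1 : m ≤ 1 := M.min'_le _ (Finset.mem_insert_self _ _)
  set s₀ := (t₁ + m) / 2
  have hs₀ : t₁ < s₀ ∧ s₀ < m := by constructor <;> simp only [s₀] <;> linarith
  have hbefore : ∀ j ∈ S, j ∉ W → ∀ s, 0 < s → s ≤ s₀ →
      SameSign (α j + s * (β j - α j)) (α j) := by
    intro j hjS hjW s hs hss₀
    by_cases hjD : j ∈ D
    · have hlt : t₁ < t j :=
        (hj₁min j hjD).lt_of_ne fun h => hjW (Finset.mem_filter.mpr ⟨hjD, h.symm⟩)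
      have hmj : m ≤ t j := M.min'_le _ (Finset.mem_insert_of_mem
        (Finset.mem_image_of_mem t (Finset.mem_filter.mpr ⟨hjD, hlt⟩)))
      rw [sameSign_add_mul_sub_iff_left (hDt j hjD).1]
      exact mul_pos (by linarith) (by linarith [ht₁.1])
    · exact sameSign_add_mul_sub_of_sameSign
        (not_not.mp fun h => hjD (Finset.mem_filter.mpr ⟨hjS, h⟩)) hs.le (by linarith)
  refine ⟨t₁, s₀, ht₁.1, W, Finset.filter_subset _ _, ⟨j₁, Finset.mem_filter.mpr ⟨hj₁D, rfl⟩⟩,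
    fun j hj => ?_, fun j hjS hjW => ⟨hbefore j hjS hjW _ ht₁.1 hs₀.1.le,
      hbefore j hjS hjW _ (ht₁.1.trans hs₀.1) le_rfl⟩, fun j hj => ?_⟩
  · obtain ⟨hjD, htj⟩ := Finset.mem_filter.mp hj
    rw [add_mul_sub_eq (hDt j hjD).1, ← htj, sub_self, mul_zero]
  · obtain ⟨hjD, htj⟩ := Finset.mem_filter.mp hj
    rw [sameSign_add_mul_sub_iff_right (hDt j hjD).1]
    change 0 < (t j - s₀) * (t j - 1)
    rw [htj]
    exact mul_pos_of_neg_of_neg (by linarith) (by linarith)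

end FirstCrossing

section Genericity

variable {V : Type*} [NormedAddCommGroup V] [NormedSpace ℝ V] [FiniteDimensional ℝ V]

theorem exists_mem_forall_notMem_of_ne_top {U : Set V} (hU : IsOpen U) (hne : U.Nonempty)
    (T : Finset (Submodule ℝ V)) (hT : ∀ P ∈ T, P ≠ ⊤) : ∃ w ∈ U, ∀ P ∈ T, w ∉ P := by
  have hdense : Dense (⋂ P ∈ (T : Set (Submodule ℝ V)), (P : Set V)ᶜ) := by
    refine dense_biInter_of_isOpen (fun P _ => P.closed_of_finiteDimensional.isOpen_compl)
      T.countable_toSet fun P hP => ?_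
    rw [← interior_eq_empty_iff_dense_compl, ← Set.not_nonempty_iff_eq_empty]
    exact fun h => hT P hP (P.eq_top_of_nonempty_interior' h)
  obtain ⟨w, hwU, hw⟩ := hdense.inter_open_nonempty U hU hne
  exact ⟨w, hwU, fun P hP => Set.mem_iInter₂.mp hw P hP⟩

omit [FiniteDimensional ℝ V] in
theorem ker_le_ker_of_sup_span_eq_top {f g : V →ₗ[ℝ] ℝ} {u : V} (hf : f u ≠ 0)
    (h : (LinearMap.ker f ⊓ LinearMap.ker g) ⊔ Submodule.span ℝ {u} = ⊤) :
    LinearMap.ker f ≤ LinearMap.ker g := by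
  intro x hx
  obtain ⟨y, hy, z, hz, rfl⟩ := Submodule.mem_sup.mp (h ▸ Submodule.mem_top (x := x))
  obtain ⟨c, rfl⟩ := Submodule.mem_span_singleton.mp hz
  obtain ⟨hfy, hgy⟩ := Submodule.mem_inf.mp hy
  rw [LinearMap.mem_ker] at hx hfy hgy ⊢
  have hc : c = 0 := by simpa [hfy, hf] using hx
  simp [hgy, hc]

variable {J : Type*} (S : Finset J) (g : J → V →ₗ[ℝ] ℝ)

/-- A generic segment from `u` to a point of the open cell `U` of `w₀` first crosses a set `W`
of walls `ker (g j)` which all coincide, at `z₁`; just after, at `z₂`, exactly those walls have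
been crossed. -/
theorem exists_wall_crossing {U : Set V} (hU : IsOpen U) {w₀ : V} (hw₀ : w₀ ∈ U)
    (hUs : ∀ w ∈ U, ∀ j ∈ S, SameSign (g j w) (g j w₀)) {u : V} (hu : ∀ j ∈ S, g j u ≠ 0)
    (hD : (S.filter fun j => ¬ SameSign (g j u) (g j w₀)).Nonempty) :
    ∃ z₁ z₂ : V, ∃ W ⊆ S.filter (fun j => ¬ SameSign (g j u) (g j w₀)), W.Nonempty ∧
      (∀ j ∈ W, g j z₁ = 0) ∧
      (∀ j ∈ S, j ∉ W → SameSign (g j z₁) (g j u) ∧ SameSign (g j z₂) (g j u)) ∧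
      (∀ j ∈ W, SameSign (g j z₂) (g j w₀)) ∧
      ∀ j ∈ W, ∀ j' ∈ W, LinearMap.ker (g j) = LinearMap.ker (g j') := by
  set P : J × J → Submodule ℝ V := fun p =>
    (LinearMap.ker (g p.1) ⊓ LinearMap.ker (g p.2)) ⊔ Submodule.span ℝ {u}
  obtain ⟨w, hwU, hwP⟩ := exists_mem_forall_notMem_of_ne_top hU ⟨w₀, hw₀⟩
    (((S ×ˢ S).filter fun p => LinearMap.ker (g p.1) ≠ LinearMap.ker (g p.2)).image P) (by
      simp only [Finset.mem_image, Finset.mem_filter, Finset.mem_product]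
      rintro _ ⟨⟨j, j'⟩, ⟨⟨hj, hj'⟩, hne⟩, rfl⟩ htop
      refine hne (le_antisymm (ker_le_ker_of_sup_span_eq_top (hu j hj) htop)
        (ker_le_ker_of_sup_span_eq_top (hu j' hj') ?_))
      rwa [inf_comm])
  have hw : ∀ j ∈ S, SameSign (g j w) (g j w₀) := hUs w hwU
  have hDw : (S.filter fun j => ¬ SameSign (g j u) (g j w)) =
      S.filter fun j => ¬ SameSign (g j u) (g j w₀) :=
    Finset.filter_congr fun j hj =>
      not_congr ⟨fun h => h.trans (hw j hj), fun h => h.trans (hw j hj).symm⟩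
  obtain ⟨t₁, s₀, ht₁, W, hWD, hWne, hzero, hoff, hon⟩ := exists_first_crossing S
    (g · u) (g · w) hu (fun j hj => (hw j hj).ne_zero_left) (hDw ▸ hD)
  have happly : ∀ j s, g j (u + s • (w - u)) = g j u + s * (g j w - g j u) := fun j s => by
    simp only [map_add, map_smul, map_sub, smul_eq_mul]
  refine ⟨u + t₁ • (w - u), u + s₀ • (w - u), W, hDw ▸ hWD, hWne,
    fun j hj => (happly j t₁).trans (hzero j hj),
    fun j hjS hjW => by simpa only [happly] using hoff j hjS hjW,
    fun j hj => ?_, fun j hj j' hj' => ?_⟩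
  · have hjS := (Finset.mem_filter.mp (hWD hj)).1
    exact ((happly j s₀).symm ▸ hon j hj).trans (hw j hjS)
  · by_contra hne
    have hjS := (Finset.mem_filter.mp (hWD hj)).1
    have hj'S := (Finset.mem_filter.mp (hWD hj')).1
    refine hwP (P (j, j')) (Finset.mem_image_of_mem _ (Finset.mem_filter.mpr
      ⟨Finset.mem_product.mpr ⟨hjS, hj'S⟩, hne⟩)) ?_
    have hz : u + t₁ • (w - u) ∈ LinearMap.ker (g j) ⊓ LinearMap.ker (g j') :=
      ⟨(happly j t₁).trans (hzero j hj), (happly j' t₁).trans (hzero j' hj')⟩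
    have hu : u ∈ P (j, j') := Submodule.mem_sup_right (Submodule.mem_span_singleton_self u)
    have hw : w = t₁⁻¹ • (u + t₁ • (w - u) - u) + u := by
      rw [add_sub_cancel_left, smul_smul, inv_mul_cancel₀ ht₁.ne', one_smul, sub_add_cancel]
    rw [hw]
    exact add_mem (Submodule.smul_mem _ _ (sub_mem (Submodule.mem_sup_left hz) hu)) hu

end Genericity

theorem exists_ker_eq_of_isCoatom {K V : Type*} [Field K] [AddCommGroup V] [Module K V]
    {H : Submodule K V} (hH : IsCoatom H) : ∃ f : V →ₗ[K] K, LinearMap.ker f = H := by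
  obtain ⟨f, hf, hle⟩ := H.exists_le_ker_of_lt_top hH.lt_top
  exact ⟨f, (hH.le_iff.mp hle).resolve_left (mt LinearMap.ker_eq_top.mp hf)⟩

variable {A : Type} [NormedAddCommGroup A] [InnerProductSpace ℝ A] [FiniteDimensional ℝ A]

def hypForm (H : Submodule ℝ A) : A →ₗ[ℝ] ℝ :=
  if h : ∃ f : A →ₗ[ℝ] ℝ, LinearMap.ker f = H then h.choose else 0

variable {𝒜 : RealArr A} {H B : Submodule ℝ A}

theorem ker_hypForm (hH : H ∈ 𝒜.hyps) : LinearMap.ker (hypForm H) = H := by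
  have h := exists_ker_eq_of_isCoatom (𝒜.coatoms H hH)
  rw [hypForm, dif_pos h]
  exact h.choose_spec

theorem hypForm_eq_zero_iff (hH : H ∈ 𝒜.hyps) {x : A} : hypForm H x = 0 ↔ x ∈ H := by
  rw [← LinearMap.mem_ker, ker_hypForm hH]

theorem continuous_hypForm (H : Submodule ℝ A) : Continuous (hypForm H) :=
  LinearMap.continuous_of_finiteDimensional _

theorem not_top_le_of_mem (hH : H ∈ 𝒜.hyps) : ¬ ⊤ ≤ H :=
  fun h => (𝒜.coatoms H hH).1 (top_le_iff.mp h)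

section SignCells

variable (𝒜) in
def stratum (B : Submodule ℝ A) : Set A :=
  {y : A | y ∈ B ∧ ∀ H ∈ 𝒜.hyps, ¬ B ≤ H → y ∉ H}

variable (𝒜) in
def signCell (B : Submodule ℝ A) (x : A) : Set A :=
  {z : A | z ∈ B ∧ ∀ H ∈ 𝒜.hyps, ¬ B ≤ H → SameSign (hypForm H z) (hypForm H x)}

theorem hypForm_ne_zero_of_mem_stratum {x : A} (hx : x ∈ stratum 𝒜 B) (hH : H ∈ 𝒜.hyps)
    (hBH : ¬ B ≤ H) : hypForm H x ≠ 0 :=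
  fun h => hx.2 H hH hBH ((hypForm_eq_zero_iff hH).mp h)

theorem mem_stratum_of_hypForm_ne_zero {x : A} (hxB : x ∈ B)
    (hx : ∀ H ∈ 𝒜.hyps, ¬ B ≤ H → hypForm H x ≠ 0) : x ∈ stratum 𝒜 B :=
  ⟨hxB, fun H hH hBH hxH => hx H hH hBH ((hypForm_eq_zero_iff hH).mpr hxH)⟩

theorem signCell_subset_stratum (x : A) : signCell 𝒜 B x ⊆ stratum 𝒜 B :=
  fun _ hz => mem_stratum_of_hypForm_ne_zero hz.1 fun H hH hBH => (hz.2 H hH hBH).ne_zero_left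

theorem mem_signCell_self {x : A} (hx : x ∈ stratum 𝒜 B) : x ∈ signCell 𝒜 B x :=
  ⟨hx.1, fun _ hH hBH => sameSign_self (hypForm_ne_zero_of_mem_stratum hx hH hBH)⟩

theorem convex_signCell (x : A) : Convex ℝ (signCell 𝒜 B x) := by
  rintro z₁ ⟨h₁B, h₁⟩ z₂ ⟨h₂B, h₂⟩ a b ha hb hab
  refine ⟨B.add_mem (B.smul_mem a h₁B) (B.smul_mem b h₂B), fun H hH hBH => ?_⟩
  have e : hypForm H (a • z₁ + b • z₂) * hypForm H x =
      a * (hypForm H z₁ * hypForm H x) + b * (hypForm H z₂ * hypForm H x) := by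
    simp only [map_add, map_smul, smul_eq_mul]; ring
  rw [SameSign, e]
  rcases ha.eq_or_lt with rfl | ha
  · obtain rfl : b = 1 := by simpa using hab
    simpa [SameSign] using h₂ H hH hBH
  · exact add_pos_of_pos_of_nonneg (mul_pos ha (h₁ H hH hBH)) (mul_nonneg hb (h₂ H hH hBH).le)

theorem connectedComponentIn_stratum_subset {x : A} (hx : x ∈ stratum 𝒜 B) :
    connectedComponentIn (stratum 𝒜 B) x ⊆ signCell 𝒜 B x := by
  set K := connectedComponentIn (stratum 𝒜 B) x
  have hxK : x ∈ K := mem_connectedComponentIn hx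
  intro z hz
  refine ⟨(connectedComponentIn_subset _ _ hz).1, fun H hH hBH => ?_⟩
  have hne : ∀ w ∈ K, hypForm H w ≠ 0 := fun w hw =>
    hypForm_ne_zero_of_mem_stratum (connectedComponentIn_subset _ _ hw) hH hBH
  have hivt : ∀ {b c}, b ∈ K → c ∈ K → Set.Icc (hypForm H b) (hypForm H c) ⊆ hypForm H '' K :=
    fun hb hc => isPreconnected_connectedComponentIn.intermediate_value hb hc
      (continuous_hypForm H).continuousOn
  by_contra hs
  have hprod : hypForm H z * hypForm H x < 0 :=
    (not_lt.mp hs).lt_of_ne (mul_ne_zero (hne z hz) (hne x hxK))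
  obtain ⟨w, hw, hw0⟩ : (0 : ℝ) ∈ hypForm H '' K := by
    rcases mul_neg_iff.mp hprod with ⟨hz0, hx0⟩ | ⟨hz0, hx0⟩
    exacts [hivt hxK hz ⟨hx0.le, hz0.le⟩, hivt hz hxK ⟨hz0.le, hx0.le⟩]
  exact hne w hw hw0

theorem connectedComponentIn_stratum {x : A} (hx : x ∈ stratum 𝒜 B) :
    connectedComponentIn (stratum 𝒜 B) x = signCell 𝒜 B x :=
  (connectedComponentIn_stratum_subset hx).antisymm
    ((convex_signCell x).isPreconnected.subset_connectedComponentIn (mem_signCell_self hx)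
      (signCell_subset_stratum x))

theorem cmpl_eq_stratum_top : cmpl 𝒜 = stratum 𝒜 ⊤ :=
  Set.ext fun _ => ⟨fun h => ⟨trivial, fun H hH _ => h H hH⟩,
    fun h H hH => h.2 H hH (not_top_le_of_mem hH)⟩

end SignCells

namespace Chamber

def pt (C : Chamber 𝒜) : A := C.2.choose

theorem pt_mem_cmpl (C : Chamber 𝒜) : C.pt ∈ cmpl 𝒜 := C.2.choose_spec.1

theorem eq_connectedComponentIn (C : Chamber 𝒜) : C.1 = connectedComponentIn (cmpl 𝒜) C.pt :=
  C.2.choose_spec.2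

theorem mem_iff (C : Chamber 𝒜) (z : A) :
    z ∈ C.1 ↔ ∀ H ∈ 𝒜.hyps, SameSign (hypForm H z) (hypForm H C.pt) := by
  have hpt : C.pt ∈ stratum 𝒜 ⊤ := cmpl_eq_stratum_top (𝒜 := 𝒜) ▸ C.pt_mem_cmpl
  rw [C.eq_connectedComponentIn, cmpl_eq_stratum_top, connectedComponentIn_stratum hpt]
  exact ⟨fun h H hH => h.2 H hH (not_top_le_of_mem hH), fun h => ⟨trivial, fun H hH _ => h H hH⟩⟩

theorem hypForm_pt_ne_zero (C : Chamber 𝒜) (hH : H ∈ 𝒜.hyps) : hypForm H C.pt ≠ 0 :=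
  fun h => C.pt_mem_cmpl H hH ((hypForm_eq_zero_iff hH).mp h)

theorem pt_mem (C : Chamber 𝒜) : C.pt ∈ C.1 :=
  (C.mem_iff _).mpr fun _ hH => sameSign_self (C.hypForm_pt_ne_zero hH)

theorem isOpen (C : Chamber 𝒜) : IsOpen C.1 := by
  simpa only [← C.mem_iff, Set.ofPred_mem_eq] using
    isOpen_setOf_sameSign 𝒜.hyps _ continuous_hypForm fun H => hypForm H C.pt

theorem eq_of_mem {C D : Chamber 𝒜} {z : A} (hC : z ∈ C.1) (hD : z ∈ D.1) : C = D := by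
  rw [eq_connectedComponentIn] at hC hD
  refine Subtype.ext ?_
  rw [C.eq_connectedComponentIn, D.eq_connectedComponentIn, connectedComponentIn_eq hC,
    connectedComponentIn_eq hD]

theorem exists_sameSign {z : A} (hz : ∀ H ∈ 𝒜.hyps, hypForm H z ≠ 0) :
    ∃ C : Chamber 𝒜, ∀ H ∈ 𝒜.hyps, SameSign (hypForm H C.pt) (hypForm H z) := by
  have hzc : z ∈ cmpl 𝒜 := fun H hH hzH => hz H hH ((hypForm_eq_zero_iff hH).mpr hzH)
  let C : Chamber 𝒜 := ⟨connectedComponentIn (cmpl 𝒜) z, z, hzc, rfl⟩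
  exact ⟨C, fun H hH => ((C.mem_iff z).mp (mem_connectedComponentIn hzc) H hH).symm⟩

end Chamber

theorem separates_iff {C D : Chamber 𝒜} (hH : H ∈ 𝒜.hyps) :
    Separates H C.1 D.1 ↔ ¬ SameSign (hypForm H C.pt) (hypForm H D.pt) := by
  set c := hypForm H C.pt
  set d := hypForm H D.pt
  constructor
  · rintro ⟨f, hker, hpos, hneg⟩ hcd
    have hfC := hpos _ C.pt_mem
    have hfD := hneg _ D.pt_mem
    have hmem : f D.pt • C.pt - f C.pt • D.pt ∈ H := by
      rw [← hker, LinearMap.mem_ker]; simp only [map_sub, map_smul, smul_eq_mul]; ring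
    have e : f D.pt * c = f C.pt * d := by
      have := (hypForm_eq_zero_iff hH).mpr hmem
      simp only [map_sub, map_smul, smul_eq_mul] at this
      linarith
    have : f D.pt * (c * c) = f C.pt * (c * d) := by rw [← mul_assoc, e]; ring
    nlinarith [mul_self_pos.mpr (C.hypForm_pt_ne_zero hH), show 0 < c * d from hcd]
  · intro hcd
    have hcd' : c * d < 0 :=
      (not_lt.mp hcd).lt_of_ne (mul_ne_zero (C.hypForm_pt_ne_zero hH) (D.hypForm_pt_ne_zero hH))
    refine ⟨c • hypForm H, ?_, fun x hx => ?_, fun x hx => ?_⟩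
    · rw [LinearMap.ker_smul _ _ (C.hypForm_pt_ne_zero hH), ker_hypForm hH]
    · have : 0 < hypForm H x * c := (C.mem_iff x).mp hx H hH
      simpa [mul_comm] using this
    · have : 0 < hypForm H x * d := (D.mem_iff x).mp hx H hH
      simp only [LinearMap.smul_apply, smul_eq_mul]
      nlinarith [mul_self_pos.mpr (D.hypForm_pt_ne_zero hH)]

section Galleries

def sepSet (x y : Chamber 𝒜) : Finset (Submodule ℝ A) :=
  𝒜.hyps.filter fun H => ¬ SameSign (hypForm H x.pt) (hypForm H y.pt)

theorem mem_sepSet {x y : Chamber 𝒜} :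
    H ∈ sepSet x y ↔ H ∈ 𝒜.hyps ∧ ¬ SameSign (hypForm H x.pt) (hypForm H y.pt) :=
  Finset.mem_filter

theorem sepSet_comm (x y : Chamber 𝒜) : sepSet x y = sepSet y x :=
  Finset.filter_congr fun _ _ => not_congr SameSign.comm

theorem eq_of_sepSet_eq_empty {x y : Chamber 𝒜} (h : sepSet x y = ∅) : x = y :=
  Chamber.eq_of_mem x.pt_mem <| (y.mem_iff _).mpr fun H hH =>
    not_not.mp fun hs => Finset.notMem_empty H (h ▸ mem_sepSet.mpr ⟨hH, hs⟩)

theorem sepSet_self (x : Chamber 𝒜) : sepSet x x = ∅ :=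
  Finset.filter_eq_empty_iff.mpr fun _ hH h => h (sameSign_self (x.hypForm_pt_ne_zero hH))

theorem sepSet_subset_union (x z y : Chamber 𝒜) : sepSet x y ⊆ sepSet x z ∪ sepSet z y := by
  intro H hH
  obtain ⟨hH, hxy⟩ := mem_sepSet.mp hH
  simp only [Finset.mem_union, mem_sepSet, hH, true_and]
  by_contra! h
  exact hxy (h.1.trans h.2)

theorem sepSet_eq_union_of_disjoint {x z y : Chamber 𝒜}
    (h : Disjoint (sepSet x z) (sepSet z y)) : sepSet x y = sepSet x z ∪ sepSet z y := by
  refine (sepSet_subset_union x z y).antisymm fun H hH => ?_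
  rcases Finset.mem_union.mp hH with hxz | hzy
  · have hzy := Finset.disjoint_left.mp h hxz
    obtain ⟨hH, hxz⟩ := mem_sepSet.mp hxz
    refine mem_sepSet.mpr ⟨hH, fun hxy => hxz ?_⟩
    exact hxy.trans (not_not.mp fun hs => hzy (mem_sepSet.mpr ⟨hH, hs⟩)).symm
  · have hxz := Finset.disjoint_right.mp h hzy
    obtain ⟨hH, hzy⟩ := mem_sepSet.mp hzy
    refine mem_sepSet.mpr ⟨hH, fun hxy => hzy ?_⟩
    exact (not_not.mp fun hs => hxz (mem_sepSet.mpr ⟨hH, hs⟩)).symm.trans hxy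

theorem disjoint_sepSet_of_subset {x z y : Chamber 𝒜} (h : sepSet z y ⊆ sepSet x y) :
    Disjoint (sepSet x z) (sepSet z y) := by
  refine Finset.disjoint_left.mpr fun H hxz hzy => ?_
  obtain ⟨hH, hxy⟩ := mem_sepSet.mp (h hzy)
  exact hxy (SameSign.of_not_of_not (mem_sepSet.mp hxz).2 (fun h' => (mem_sepSet.mp hzy).2 h'.symm)
    (x.hypForm_pt_ne_zero hH) (y.hypForm_pt_ne_zero hH) (z.hypForm_pt_ne_zero hH))

theorem adj_iff {x y : Chamber 𝒜} : Adj 𝒜 x y ↔ ∃ H, sepSet x y = {H} := by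
  simp only [Adj, Finset.eq_singleton_iff_unique_mem, mem_sepSet]
  constructor
  · rintro ⟨H, ⟨hH, hs⟩, huniq⟩
    exact ⟨H, ⟨hH, (separates_iff hH).mp hs⟩,
      fun H' ⟨hH', hs'⟩ => huniq H' ⟨hH', (separates_iff hH').mpr hs'⟩⟩
  · rintro ⟨H, ⟨hH, hs⟩, huniq⟩
    exact ⟨H, ⟨hH, (separates_iff hH).mpr hs⟩,
      fun H' ⟨hH', hs'⟩ => huniq H' ⟨hH', (separates_iff hH').mp hs'⟩⟩

theorem card_sepSet_le_length {x y : Chamber 𝒜} (p : Path 𝒜 x y) :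
    (sepSet x y).card ≤ p.length := by
  induction p with
  | nil x => simp [sepSet_self, Path.length]
  | @cons x w y s p ih =>
    have hxw : (sepSet x w).card = 1 := by
      obtain ⟨H, hH⟩ := match s with
        | .pos h => adj_iff.mp h
        | .neg h => sepSet_comm x w ▸ adj_iff.mp h
      rw [hH, Finset.card_singleton]
    calc (sepSet x y).card ≤ (sepSet x w ∪ sepSet w y).card :=
          Finset.card_le_card (sepSet_subset_union x w y)
      _ ≤ (sepSet x w).card + (sepSet w y).card := Finset.card_union_le _ _
      _ ≤ p.length + 1 := by rw [hxw]; omega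

/-- A generic segment from `x` into `y` leaves `x` through a single wall of `sepSet x y`. -/
theorem exists_adj_sepSet_eq_erase {x y : Chamber 𝒜} (hne : (sepSet x y).Nonempty) :
    ∃ x₁ : Chamber 𝒜, ∃ H ∈ sepSet x y, Adj 𝒜 x x₁ ∧ sepSet x₁ y = (sepSet x y).erase H := by
  obtain ⟨z₁, z, W, hWD, ⟨H₁, hH₁W⟩, -, hoff, hon, hker⟩ := exists_wall_crossing 𝒜.hyps hypForm
    y.isOpen y.pt_mem (fun w hw H hH => (y.mem_iff w).mp hw H hH)
    (fun H hH => x.hypForm_pt_ne_zero hH) hne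
  have hW : ∀ H ∈ W, H = H₁ := fun H hH => by
    have hyps : ∀ H ∈ W, H ∈ 𝒜.hyps := fun H hH => (mem_sepSet.mp (hWD hH)).1
    rw [← ker_hypForm (hyps H hH), ← ker_hypForm (hyps H₁ hH₁W), hker H hH H₁ hH₁W]
  have hH₁ : H₁ ∈ 𝒜.hyps := (mem_sepSet.mp (hWD hH₁W)).1
  have hz : ∀ H ∈ 𝒜.hyps, hypForm H z ≠ 0 := fun H hH => by
    by_cases hHW : H = H₁
    · exact (hon H (hHW ▸ hH₁W)).ne_zero_left
    · exact (hoff H hH fun h => hHW (hW H h)).2.ne_zero_left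
  obtain ⟨x₁, hx₁⟩ := Chamber.exists_sameSign hz
  have hx₁x : ∀ H ∈ 𝒜.hyps, H ≠ H₁ → SameSign (hypForm H x₁.pt) (hypForm H x.pt) :=
    fun H hH hHW => (hx₁ H hH).trans (hoff H hH fun h => hHW (hW H h)).2
  have hx₁y : SameSign (hypForm H₁ x₁.pt) (hypForm H₁ y.pt) := (hx₁ H₁ hH₁).trans (hon H₁ hH₁W)
  have hxy : ¬ SameSign (hypForm H₁ x.pt) (hypForm H₁ y.pt) := (mem_sepSet.mp (hWD hH₁W)).2
  refine ⟨x₁, H₁, hWD hH₁W, adj_iff.mpr ⟨H₁, Finset.eq_singleton_iff_unique_mem.mpr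
    ⟨mem_sepSet.mpr ⟨hH₁, fun h => hxy (h.trans hx₁y)⟩, fun H hH => ?_⟩⟩, ?_⟩
  · obtain ⟨hH, hs⟩ := mem_sepSet.mp hH
    exact not_not.mp fun hHW => hs (hx₁x H hH hHW).symm
  · ext H
    simp only [Finset.mem_erase, mem_sepSet]
    by_cases hHW : H = H₁
    · subst hHW
      simp [hx₁y]
    · simp only [hHW, ne_eq, not_false_eq_true, true_and]
      exact and_congr_right fun hH =>
        not_congr ((hx₁x H hH hHW).congr (sameSign_self (y.hypForm_pt_ne_zero hH)))

theorem exists_positive_path_length_eq (x y : Chamber 𝒜) :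
    ∃ p : Path 𝒜 x y, p.Positive ∧ p.length = (sepSet x y).card := by
  induction hn : (sepSet x y).card using Nat.strong_induction_on generalizing x with
  | _ n ih =>
    rcases (sepSet x y).eq_empty_or_nonempty with h | hne
    · obtain rfl := eq_of_sepSet_eq_empty h
      exact ⟨.nil x, trivial, by rw [← hn, h]; rfl⟩
    obtain ⟨x₁, H, hH, hadj, hx₁⟩ := exists_adj_sepSet_eq_erase hne
    have hcard : (sepSet x₁ y).card + 1 = n := by
      rw [hx₁, Finset.card_erase_add_one hH, hn]
    obtain ⟨p, hp, hplen⟩ := ih _ (by omega) x₁ rfl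
    exact ⟨.cons (.pos hadj) p, hp, by simp only [Path.length]; omega⟩

namespace Path

theorem length_comp {x y z : Chamber 𝒜} (p : Path 𝒜 x y) (q : Path 𝒜 y z) :
    (p.comp q).length = p.length + q.length := by
  induction p with
  | nil _ => simp [comp, length]
  | cons s p ih => simp [comp, length, ih]; omega

theorem Positive.comp {x y z : Chamber 𝒜} {p : Path 𝒜 x y} {q : Path 𝒜 y z} (hp : p.Positive)
    (hq : q.Positive) : (p.comp q).Positive := by
  induction p with
  | nil _ => exact hq
  | cons s p ih =>
    cases s with
    | pos h => exact ih hp hq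
    | neg h => exact hp.elim

theorem minimal_of_length_eq {x y : Chamber 𝒜} {p : Path 𝒜 x y}
    (h : p.length = (sepSet x y).card) : p.Minimal :=
  fun q => h ▸ card_sepSet_le_length q

theorem Minimal.length_eq {x y : Chamber 𝒜} {p : Path 𝒜 x y} (hp : p.Minimal) :
    p.length = (sepSet x y).card := by
  obtain ⟨q, -, hq⟩ := exists_positive_path_length_eq x y
  exact (hq ▸ hp q).antisymm (card_sepSet_le_length p)

theorem Minimal.comp {x y z : Chamber 𝒜} {p : Path 𝒜 x y} {q : Path 𝒜 y z} (hp : p.Minimal)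
    (hq : q.Minimal) (h : Disjoint (sepSet x y) (sepSet y z)) : (p.comp q).Minimal :=
  minimal_of_length_eq <| by
    rw [length_comp, hp.length_eq, hq.length_eq, sepSet_eq_union_of_disjoint h,
      Finset.card_union_of_disjoint h]

end Path

theorem exists_minimal_positive_path (x y : Chamber 𝒜) :
    ∃ p : Path 𝒜 x y, p.Positive ∧ p.Minimal :=
  (exists_positive_path_length_eq x y).imp fun _ h => ⟨h.1, Path.minimal_of_length_eq h.2⟩

end Galleries

theorem eventually_sameSign_add_smul (z c : A) :
    ∀ᶠ ε in 𝓝[>] (0 : ℝ), ∀ H ∈ 𝒜.hyps,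
      (hypForm H z ≠ 0 → SameSign (hypForm H (z + ε • c)) (hypForm H z)) ∧
      (hypForm H z = 0 → hypForm H c ≠ 0 → SameSign (hypForm H (z + ε • c)) (hypForm H c)) := by
  simp only [Filter.eventually_all_finset, map_add, map_smul, smul_eq_mul]
  intro H _
  by_cases hz : hypForm H z = 0
  · filter_upwards [self_mem_nhdsWithin] with ε hε
    simpa [hz] using fun hc => sameSign_mul_left hc hε
  · filter_upwards [nhdsWithin_le_nhds (eventually_sameSign_add_mul hz (hypForm H c))] with ε hε
    simpa [hz] using hε

theorem exists_chamber_of_mem_stratum {z : A} (hz : z ∈ stratum 𝒜 B) (a : Chamber 𝒜) :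
    ∃ v : Chamber 𝒜, (∀ H ∈ 𝒜.hyps, ¬ B ≤ H → SameSign (hypForm H v.pt) (hypForm H z)) ∧
      ∀ H ∈ 𝒜.hyps, B ≤ H → SameSign (hypForm H v.pt) (hypForm H a.pt) := by
  obtain ⟨ε, hε⟩ := (eventually_sameSign_add_smul (𝒜 := 𝒜) z a.pt).exists
  have hB : ∀ H ∈ 𝒜.hyps, B ≤ H → SameSign (hypForm H (z + ε • a.pt)) (hypForm H a.pt) :=
    fun H hH hBH => (hε H hH).2 ((hypForm_eq_zero_iff hH).mpr (hBH hz.1)) (a.hypForm_pt_ne_zero hH)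
  have hnB : ∀ H ∈ 𝒜.hyps, ¬ B ≤ H → SameSign (hypForm H (z + ε • a.pt)) (hypForm H z) :=
    fun H hH hBH => (hε H hH).1 (hypForm_ne_zero_of_mem_stratum hz hH hBH)
  obtain ⟨v, hv⟩ := Chamber.exists_sameSign fun H hH => by
    by_cases hBH : B ≤ H
    exacts [(hB H hH hBH).ne_zero_left, (hnB H hH hBH).ne_zero_left]
  exact ⟨v, fun H hH hBH => (hv H hH).trans (hnB H hH hBH),
    fun H hH hBH => (hv H hH).trans (hB H hH hBH)⟩

namespace Face

def pt (F : Face 𝒜) : A := F.hc.choose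

theorem pt_mem_stratum (F : Face 𝒜) : F.pt ∈ stratum 𝒜 F.B :=
  ⟨F.hc.choose_spec.1, F.hc.choose_spec.2.1⟩

theorem c_eq (F : Face 𝒜) : F.c = connectedComponentIn (stratum 𝒜 F.B) F.pt :=
  F.hc.choose_spec.2.2

theorem mem_c_iff (F : Face 𝒜) (z : A) :
    z ∈ F.c ↔ z ∈ F.B ∧ ∀ H ∈ 𝒜.hyps, ¬ F.B ≤ H → SameSign (hypForm H z) (hypForm H F.pt) := by
  rw [F.c_eq, connectedComponentIn_stratum F.pt_mem_stratum]
  rfl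

theorem pt_mem_c (F : Face 𝒜) : F.pt ∈ F.c :=
  (F.mem_c_iff _).mpr (mem_signCell_self F.pt_mem_stratum)

theorem hypForm_ne_zero_of_mem_c {F : Face 𝒜} {z : A} (hz : z ∈ F.c) (hH : H ∈ 𝒜.hyps)
    (hBH : ¬ F.B ≤ H) : hypForm H z ≠ 0 :=
  (((F.mem_c_iff z).mp hz).2 H hH hBH).ne_zero_left

theorem vert_iff_of_mem {F : Face 𝒜} {z : A} (hz : z ∈ F.c) (v : Chamber 𝒜) :
    F.vert v ↔ ∀ H ∈ 𝒜.hyps, ¬ F.B ≤ H → SameSign (hypForm H z) (hypForm H v.pt) := by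
  constructor
  · intro hv H hH hBH
    have hclosed : IsClosed {w : A | 0 ≤ hypForm H w * hypForm H v.pt} :=
      isClosed_le continuous_const ((continuous_hypForm H).mul continuous_const)
    have hle : 0 ≤ hypForm H z * hypForm H v.pt :=
      closure_minimal (fun w hw => ((v.mem_iff w).mp hw H hH).le) hclosed (hv hz)
    exact hle.lt_of_ne
      (mul_ne_zero (hypForm_ne_zero_of_mem_c hz hH hBH) (v.hypForm_pt_ne_zero hH)).symm
  · intro hzv z' hz'
    have hz'v : ∀ H ∈ 𝒜.hyps, ¬ F.B ≤ H → SameSign (hypForm H z') (hypForm H v.pt) :=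
      fun H hH hBH => (((F.mem_c_iff z').mp hz').2 H hH hBH).trans
        ((((F.mem_c_iff z).mp hz).2 H hH hBH).symm.trans (hzv H hH hBH))
    have hlim : Tendsto (fun ε : ℝ => z' + ε • v.pt) (𝓝[>] 0) (𝓝 z') :=
      ((continuous_const.add (continuous_id.smul continuous_const)).tendsto' 0 z'
        (by simp)).mono_left nhdsWithin_le_nhds
    refine mem_closure_of_tendsto hlim ?_
    filter_upwards [eventually_sameSign_add_smul (𝒜 := 𝒜) z' v.pt] with ε hε
    refine (v.mem_iff _).mpr fun H hH => ?_
    by_cases hBH : F.B ≤ H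
    · exact (hε H hH).2 ((hypForm_eq_zero_iff hH).mpr (hBH ((F.mem_c_iff z').mp hz').1))
        (v.hypForm_pt_ne_zero hH)
    · exact ((hε H hH).1 (hz'v H hH hBH).ne_zero_left).trans (hz'v H hH hBH)

theorem vert_iff (F : Face 𝒜) (v : Chamber 𝒜) :
    F.vert v ↔ ∀ H ∈ 𝒜.hyps, ¬ F.B ≤ H → SameSign (hypForm H F.pt) (hypForm H v.pt) :=
  vert_iff_of_mem F.pt_mem_c v

def ofMem (B : Submodule ℝ A) (hB : ∃ S ⊆ 𝒜.hyps, B = S.inf id) {z : A}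
    (hz : z ∈ stratum 𝒜 B) : Face 𝒜 :=
  ⟨B, connectedComponentIn (stratum 𝒜 B) z, hB, z, hz.1, hz.2, rfl⟩

theorem mem_ofMem {hB : ∃ S ⊆ 𝒜.hyps, B = S.inf id} {z : A} (hz : z ∈ stratum 𝒜 B) :
    z ∈ (ofMem B hB hz).c :=
  mem_connectedComponentIn hz

theorem le_B_of_forall {F : Face 𝒜} {B' : Submodule ℝ A}
    (h : ∀ H ∈ 𝒜.hyps, F.B ≤ H → B' ≤ H) : B' ≤ F.B := by
  obtain ⟨S, hS, hFB⟩ := F.hB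
  rw [hFB]
  exact Finset.le_inf fun H hH => h H (hS hH) (hFB ▸ Finset.inf_le hH)

end Face

theorem IsAnt.sepSet_eq {F : Face 𝒜} {a y : Chamber 𝒜} (h : IsAnt F a y) :
    sepSet a y = 𝒜.hyps.filter (F.B ≤ ·) :=
  Finset.filter_congr fun H hH => ((h.2.2 H hH).trans (separates_iff hH)).symm

theorem IsAnt.B_le_of_le {F F' : Face 𝒜} {a y : Chamber 𝒜} (h : IsAnt F a y) (hle : F.le F')
    (hH : H ∈ 𝒜.hyps) (hBH : F.B ≤ H) : F'.B ≤ H := by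
  by_contra hB'H
  have ha := (F'.vert_iff a).mp (hle a h.1) H hH hB'H
  have hy := (F'.vert_iff y).mp (hle y h.2.1) H hH hB'H
  exact (separates_iff hH).mp ((h.2.2 H hH).mp hBH) (ha.symm.trans hy)

theorem finrank_inf_add_one (hH : H ∈ 𝒜.hyps) (hBH : ¬ B ≤ H) :
    Module.finrank ℝ ↥(B ⊓ H) + 1 = Module.finrank ℝ B := by
  have hH' : Module.finrank ℝ H + 1 = Module.finrank ℝ A := by
    refine ker_hypForm hH ▸ Module.Dual.finrank_ker_add_one_of_ne_zero fun h0 => ?_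
    exact (𝒜.coatoms H hH).1 (by rw [← ker_hypForm hH, h0, LinearMap.ker_zero])
  have hsup : B ⊔ H = ⊤ := (𝒜.coatoms H hH).2 _ (right_lt_sup.mpr hBH)
  have := Submodule.finrank_sup_add_finrank_inf_eq B H
  rw [hsup, finrank_top] at this
  omega

section ElementarySegments

/-- The walls of the restriction of `𝒜` to `F.B` that separate `z` from the face `F`. -/
def sepWalls (F : Face 𝒜) (z : A) : Finset (Submodule ℝ A) :=
  (𝒜.hyps.filter fun H => ¬ F.B ≤ H).filter
    fun H => ¬ SameSign (hypForm H z) (hypForm H F.pt)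

theorem mem_sepWalls {F : Face 𝒜} {z : A} : H ∈ sepWalls F z ↔
    H ∈ 𝒜.hyps ∧ ¬ F.B ≤ H ∧ ¬ SameSign (hypForm H z) (hypForm H F.pt) := by
  simp only [sepWalls, Finset.mem_filter, and_assoc]

/-- Crossing the walls of `sepWalls F z` first hit by a generic segment in `F.B` from `z`
towards `F`: they all cut `F.B` along the same hyperplane `F.B ⊓ H₁`, met at `z₁`, and `z₂`
lies just beyond it. -/
theorem exists_crossing (F : Face 𝒜) {z : A} (hz : z ∈ stratum 𝒜 F.B)
    (hne : (sepWalls F z).Nonempty) :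
    ∃ H₁ ∈ 𝒜.hyps, ¬ F.B ≤ H₁ ∧ ∃ z₁ ∈ F.B ⊓ H₁, ∃ z₂ ∈ F.B,
      (∀ H ∈ 𝒜.hyps, ¬ F.B ⊓ H₁ ≤ H →
        SameSign (hypForm H z₁) (hypForm H z) ∧ SameSign (hypForm H z₂) (hypForm H z)) ∧
      ∀ H ∈ 𝒜.hyps, ¬ F.B ≤ H → F.B ⊓ H₁ ≤ H →
        SameSign (hypForm H z₂) (hypForm H F.pt) ∧ ¬ SameSign (hypForm H z) (hypForm H F.pt) := by
  set S := 𝒜.hyps.filter fun H => ¬ F.B ≤ H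
  set g : Submodule ℝ A → F.B →ₗ[ℝ] ℝ := fun H => (hypForm H).comp F.B.subtype
  have hU : ((↑) : F.B → A) ⁻¹' F.c = {w | ∀ H ∈ S, SameSign (g H w) (hypForm H F.pt)} := by
    ext w
    simp only [Set.mem_preimage, F.mem_c_iff, w.2, true_and, Finset.mem_filter, and_imp, S]
    rfl
  obtain ⟨z₁, z₂, W, hWD, ⟨H₁, hH₁W⟩, hzero, hoff, hon, hker⟩ :=
    exists_wall_crossing S g (u := ⟨z, hz.1⟩) (w₀ := ⟨F.pt, F.pt_mem_stratum.1⟩)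
      (hU ▸ isOpen_setOf_sameSign S (fun H w => g H w) (fun H => (continuous_hypForm H).comp
        continuous_subtype_val) _) (by simpa using F.pt_mem_c)
      (fun w hw => by rw [hU] at hw; exact hw)
      (fun H hH => hypForm_ne_zero_of_mem_stratum hz (Finset.mem_filter.mp hH).1
        (Finset.mem_filter.mp hH).2) hne
  have hWS : ∀ H ∈ W, H ∈ 𝒜.hyps ∧ ¬ F.B ≤ H := fun H hH =>
    Finset.mem_filter.mp (Finset.mem_filter.mp (hWD hH)).1
  have hWinf : ∀ H ∈ W, F.B ⊓ H = F.B ⊓ H₁ := fun H hH => by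
    have := congrArg (Submodule.map F.B.subtype) (hker H hH H₁ hH₁W)
    simpa only [g, LinearMap.ker_comp, ker_hypForm (hWS H hH).1, ker_hypForm (hWS H₁ hH₁W).1,
      Submodule.map_comap_subtype] using this
  have hnotW : ∀ H ∈ 𝒜.hyps, ¬ F.B ⊓ H₁ ≤ H → H ∈ S ∧ H ∉ W := fun H hH h =>
    ⟨Finset.mem_filter.mpr ⟨hH, fun hBH => h (inf_le_left.trans hBH)⟩,
      fun hW => h (hWinf H hW ▸ inf_le_right)⟩
  have hz₁ : (z₁ : A) ∈ F.B ⊓ H₁ := ⟨z₁.2, (hypForm_eq_zero_iff (hWS H₁ hH₁W).1).mp (hzero H₁ hH₁W)⟩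
  refine ⟨H₁, (hWS H₁ hH₁W).1, (hWS H₁ hH₁W).2, z₁, hz₁, z₂, z₂.2,
    fun H hH h => hoff H (hnotW H hH h).1 (hnotW H hH h).2, fun H hH hBH h => ?_⟩
  have hHW : H ∈ W := by
    by_contra hHW
    refine (hoff H (Finset.mem_filter.mpr ⟨hH, hBH⟩) hHW).1.ne_zero_left ?_
    exact (hypForm_eq_zero_iff hH).mpr (h hz₁)
  exact ⟨hon H hHW, (Finset.mem_filter.mp (hWD hHW)).2⟩

theorem adjFaces_ofMem {B : Submodule ℝ A} (hB : ∃ S ⊆ 𝒜.hyps, B = S.inf id) {H₁ : Submodule ℝ A}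
    (hH₁ : H₁ ∈ 𝒜.hyps) (hBH₁ : ¬ B ≤ H₁) {z z₁ z₂ : A} (hz : z ∈ stratum 𝒜 B)
    (hz₂ : z₂ ∈ stratum 𝒜 B) (hz₁ : z₁ ∈ B ⊓ H₁)
    (hoff : ∀ H ∈ 𝒜.hyps, ¬ B ⊓ H₁ ≤ H →
      SameSign (hypForm H z₁) (hypForm H z) ∧ SameSign (hypForm H z₂) (hypForm H z))
    (hcross : ¬ SameSign (hypForm H₁ z) (hypForm H₁ z₂)) :
    AdjFaces (Face.ofMem B hB hz) (Face.ofMem B hB hz₂) := by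
  have hB₁ : ∃ S ⊆ 𝒜.hyps, B ⊓ H₁ = S.inf id := by
    obtain ⟨S, hS, rfl⟩ := hB
    exact ⟨insert H₁ S, Finset.insert_subset hH₁ hS, by rw [Finset.inf_insert, id, inf_comm]⟩
  have hz₁' : z₁ ∈ stratum 𝒜 (B ⊓ H₁) :=
    mem_stratum_of_hypForm_ne_zero hz₁ fun H hH h => (hoff H hH h).1.ne_zero_left
  have hle : ∀ {w : A} (hw : w ∈ stratum 𝒜 B),
      (∀ H ∈ 𝒜.hyps, ¬ B ⊓ H₁ ≤ H → SameSign (hypForm H z₁) (hypForm H w)) →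
      (Face.ofMem B hB hw).le (Face.ofMem (B ⊓ H₁) hB₁ hz₁') := by
    intro w hw hz₁w v hv
    rw [Face.vert_iff_of_mem (Face.mem_ofMem hw)] at hv
    rw [Face.vert_iff_of_mem (Face.mem_ofMem hz₁')]
    exact fun H hH h => (hz₁w H hH h).trans (hv H hH fun hBH => h (inf_le_left.trans hBH))
  refine ⟨fun h => hcross ?_, rfl, _, hle hz fun H hH h => (hoff H hH h).1,
    hle hz₂ fun H hH h => (hoff H hH h).1.trans (hoff H hH h).2.symm,
    (finrank_inf_add_one hH₁ hBH₁).symm⟩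
  have hzc := Face.mem_ofMem (hB := hB) hz
  rw [h] at hzc
  change z ∈ connectedComponentIn _ z₂ at hzc
  rw [connectedComponentIn_stratum hz₂] at hzc
  exact hzc.2 H₁ hH₁ hBH₁

variable {F : Face 𝒜} {a v : Chamber 𝒜} {z : A}

theorem sepSet_eq_sepWalls (ha : F.vert a)
    (hoff : ∀ H ∈ 𝒜.hyps, ¬ F.B ≤ H → SameSign (hypForm H v.pt) (hypForm H z))
    (hon : ∀ H ∈ 𝒜.hyps, F.B ≤ H → SameSign (hypForm H v.pt) (hypForm H a.pt)) :
    sepSet v a = sepWalls F z := by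
  ext H
  rw [mem_sepSet, mem_sepWalls]
  by_cases hBH : F.B ≤ H
  · simp only [hBH, not_true_eq_false, false_and, and_false, iff_false, not_and, not_not]
    exact fun hH => hon H hH hBH
  · simp only [hBH, not_false_eq_true, true_and]
    exact and_congr_right fun hH =>
      not_congr ((hoff H hH hBH).congr ((F.vert_iff a).mp ha H hH hBH).symm)

theorem exists_elemSeg_step (hz : z ∈ stratum 𝒜 F.B) (hne : (sepWalls F z).Nonempty)
    (hoff : ∀ H ∈ 𝒜.hyps, ¬ F.B ≤ H → SameSign (hypForm H v.pt) (hypForm H z))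
    (hon : ∀ H ∈ 𝒜.hyps, F.B ≤ H → SameSign (hypForm H v.pt) (hypForm H a.pt)) :
    ∃ z₂ ∈ stratum 𝒜 F.B, sepWalls F z₂ ⊂ sepWalls F z ∧ ∃ v₁ : Chamber 𝒜,
      (∀ H ∈ 𝒜.hyps, ¬ F.B ≤ H → SameSign (hypForm H v₁.pt) (hypForm H z₂)) ∧
      (∀ H ∈ 𝒜.hyps, F.B ≤ H → SameSign (hypForm H v₁.pt) (hypForm H a.pt)) ∧
      ∃ r : Path 𝒜 v v₁, r.Positive ∧ r.Minimal ∧ IsElemSegB F.B (⟦r⟧ : Mor 𝒜 v v₁) := by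
  obtain ⟨H₁, hH₁, hBH₁, z₁, hz₁, z₂, hz₂B, hbefore, hafter⟩ := exists_crossing F hz hne
  have hH₁z₂ := hafter H₁ hH₁ hBH₁ inf_le_right
  have hz₂ : z₂ ∈ stratum 𝒜 F.B := mem_stratum_of_hypForm_ne_zero hz₂B fun H hH hBH => by
    by_cases h : F.B ⊓ H₁ ≤ H
    exacts [(hafter H hH hBH h).1.ne_zero_left, (hbefore H hH h).2.ne_zero_left]
  have hsub : sepWalls F z₂ ⊂ sepWalls F z := by
    refine (Finset.ssubset_iff_of_subset fun H hH => ?_).mpr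
      ⟨H₁, mem_sepWalls.mpr ⟨hH₁, hBH₁, hH₁z₂.2⟩, fun h => (mem_sepWalls.mp h).2.2 hH₁z₂.1⟩
    obtain ⟨hH, hBH, hs⟩ := mem_sepWalls.mp hH
    by_cases h : F.B ⊓ H₁ ≤ H
    · exact absurd (hafter H hH hBH h).1 hs
    · exact mem_sepWalls.mpr ⟨hH, hBH, fun h' => hs ((hbefore H hH h).2.trans h')⟩
  obtain ⟨v₁, hoff₁, hon₁⟩ := exists_chamber_of_mem_stratum hz₂ a
  obtain ⟨r, hr, hrmin⟩ := exists_minimal_positive_path v v₁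
  have hadj := adjFaces_ofMem F.hB hH₁ hBH₁ hz hz₂ hz₁ hbefore fun h => hH₁z₂.2 (h.trans hH₁z₂.1)
  have hpar : ParTrans (Face.ofMem F.B F.hB hz) (Face.ofMem F.B F.hB hz₂) v v₁ :=
    ⟨rfl, (Face.vert_iff_of_mem (Face.mem_ofMem hz) v).mpr fun H hH hBH => (hoff H hH hBH).symm,
      (Face.vert_iff_of_mem (Face.mem_ofMem hz₂) v₁).mpr fun H hH hBH => (hoff₁ H hH hBH).symm,
      fun H hH hBH hsep => (separates_iff hH).mp hsep ((hon H hH hBH).trans (hon₁ H hH hBH).symm)⟩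
  exact ⟨z₂, hz₂, hsub, v₁, hoff₁, hon₁, r, hr, hrmin, Face.ofMem F.B F.hB hz,
    Face.ofMem F.B F.hB hz₂, rfl, hadj, hpar, r, hr, hrmin, rfl⟩

/-- A minimal positive path from `v` to `a` crosses walls in `F.B` one cell at a time, each
crossing being an elementary segment. -/
theorem isElemComp_of_minimal (ha : F.vert a) (hz : z ∈ stratum 𝒜 F.B)
    (hoff : ∀ H ∈ 𝒜.hyps, ¬ F.B ≤ H → SameSign (hypForm H v.pt) (hypForm H z))
    (hon : ∀ H ∈ 𝒜.hyps, F.B ≤ H → SameSign (hypForm H v.pt) (hypForm H a.pt))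
    {q : Path 𝒜 v a} (hq : q.Positive) (hqmin : q.Minimal) :
    IsElemComp 𝒜 F.B (⟦q⟧ : Mor 𝒜 v a) := by
  induction hn : (sepWalls F z).card using Nat.strong_induction_on generalizing z v with
  | _ n ih =>
  rcases (sepWalls F z).eq_empty_or_nonempty with h | hne
  · obtain rfl : v = a := eq_of_sepSet_eq_empty (sepSet_eq_sepWalls ha hoff hon ▸ h)
    cases q with
    | nil => exact .nil v
    | cons => exact absurd (hqmin (.nil v)) (by simp [Path.length])
  obtain ⟨z₂, hz₂, hsub, v₁, hoff₁, hon₁, r, hr, hrmin, hseg⟩ :=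
    exists_elemSeg_step hz hne hoff hon
  obtain ⟨q₁, hq₁, hq₁min⟩ := exists_minimal_positive_path v₁ a
  have hdisj : Disjoint (sepSet v v₁) (sepSet v₁ a) := disjoint_sepSet_of_subset <| by
    rw [sepSet_eq_sepWalls ha hoff₁ hon₁, sepSet_eq_sepWalls ha hoff hon]
    exact hsub.subset
  have hqr : (⟦q⟧ : Mor 𝒜 v a) = Mor.comp ⟦r⟧ ⟦q₁⟧ :=
    Quotient.sound (Rel.minpos _ _ hq (hr.comp hq₁) hqmin (hrmin.comp hq₁min hdisj))
  rw [hqr]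
  exact .comp _ _ (.single _ hseg)
    (ih _ (hn ▸ Finset.card_lt_card hsub) hz₂ hoff₁ hon₁ hq₁ hq₁min rfl)

end ElementarySegments

/-- A point of `F.B` on the far side of `F'` from `F`: it sees the hyperplanes not containing
`F.B` as the chamber `a'` opposite to `y` in `F'` does. -/
theorem exists_mem_stratum_sameSign_of_isAnt {F F' : Face 𝒜} {a a' y : Chamber 𝒜}
    (hant : IsAnt F a y) (hant' : IsAnt F' a' y) (hle : F.le F') :
    ∃ z ∈ stratum 𝒜 F.B, ∀ H ∈ 𝒜.hyps, ¬ F.B ≤ H → SameSign (hypForm H a'.pt) (hypForm H z) := by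
  have hB'B : F'.B ≤ F.B := Face.le_B_of_forall fun H hH => hant.B_le_of_le hle hH
  obtain ⟨ε, hε⟩ := (eventually_sameSign_add_smul (𝒜 := 𝒜) F'.pt (-F.pt)).exists
  have hz : ∀ H ∈ 𝒜.hyps, ¬ F.B ≤ H →
      SameSign (hypForm H a'.pt) (hypForm H (F'.pt + ε • -F.pt)) := by
    intro H hH hBH
    have hF := hypForm_ne_zero_of_mem_stratum F.pt_mem_stratum hH hBH
    by_cases hB'H : F'.B ≤ H
    · have hF'0 := (hypForm_eq_zero_iff hH).mpr (hB'H F'.pt_mem_stratum.1)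
      have hFy := (F.vert_iff y).mp hant.2.1 H hH hBH
      have ha'y := (separates_iff hH).mp ((hant'.2.2 H hH).mp hB'H)
      have ha'F : SameSign (-hypForm H F.pt) (hypForm H a'.pt) :=
        SameSign.neg_left_of_not (fun h => ha'y (h.symm.trans hFy)) hF (a'.hypForm_pt_ne_zero hH)
      have hzF := (hε H hH).2 hF'0 (by rwa [map_neg, neg_ne_zero])
      rw [map_neg] at hzF
      exact ha'F.symm.trans hzF.symm
    · exact ((F'.vert_iff a').mp hant'.1 H hH hB'H).symm.trans
        ((hε H hH).1 (hypForm_ne_zero_of_mem_stratum F'.pt_mem_stratum hH hB'H)).symm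
  refine ⟨_, mem_stratum_of_hypForm_ne_zero ?_ fun H hH hBH => (hz H hH hBH).ne_zero_right, hz⟩
  exact F.B.add_mem (hB'B F'.pt_mem_stratum.1) (F.B.smul_mem _ (F.B.neg_mem F.pt_mem_stratum.1))

theorem Mor.mk_comp_comp_symm {x y z : Chamber 𝒜} (q : Path 𝒜 x y) (p : Path 𝒜 y z) :
    Mor.comp (⟦q.comp p⟧ : Mor 𝒜 x z) (Mor.symm ⟦p⟧) = ⟦q⟧ := by
  refine Quotient.sound ?_
  have h := Rel.congr_left q (Rel.cancel p)
  rwa [Path.comp_nil, ← Path.comp_assoc] at h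

end DelGrpd

open DelGrpd in
theorem statement_15_general {A : Type} [NormedAddCommGroup A] [InnerProductSpace ℝ A]
    [FiniteDimensional ℝ A] (𝒜 : RealArr A)
    (F F' : Face 𝒜) (hle : F.le F') (y : Chamber 𝒜)
    {a a' : Chamber 𝒜} (δ : Mor 𝒜 a y) (δ' : Mor 𝒜 a' y)
    (hδ : IsGarside F δ) (hδ' : IsGarside F' δ') :
    IsElemComp 𝒜 F.B (δ'.comp δ.symm) := by
  obtain ⟨hant, p, hp, hpmin, -, rfl⟩ := hδ
  obtain ⟨hant', p', hp', hp'min, -, rfl⟩ := hδ'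
  obtain ⟨z, hz, hoff⟩ := exists_mem_stratum_sameSign_of_isAnt hant hant' hle
  -- `a` and `a'` both lie across every hyperplane containing `F.B` from `y`.
  have hon : ∀ H ∈ 𝒜.hyps, F.B ≤ H → SameSign (hypForm H a'.pt) (hypForm H a.pt) :=
    fun H hH hBH => SameSign.of_not_of_not
      ((separates_iff hH).mp ((hant'.2.2 H hH).mp (hant.B_le_of_le hle hH hBH)))
      ((separates_iff hH).mp ((hant.2.2 H hH).mp hBH))
      (a'.hypForm_pt_ne_zero hH) (a.hypForm_pt_ne_zero hH) (y.hypForm_pt_ne_zero hH)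
  obtain ⟨q, hq, hqmin⟩ := exists_minimal_positive_path a' a
  have hdisj : Disjoint (sepSet a' a) (sepSet a y) := by
    rw [hant.sepSet_eq]
    exact Finset.disjoint_right.mpr fun H hH hs =>
      (mem_sepSet.mp hs).2 (hon H (Finset.mem_filter.mp hH).1 (Finset.mem_filter.mp hH).2)
  have hp'q : (⟦p'⟧ : Mor 𝒜 a' y) = ⟦q.comp p⟧ :=
    Quotient.sound (Rel.minpos _ _ hp' (hq.comp hp) hp'min (hqmin.comp hpmin hdisj))
  rw [hp'q, Mor.mk_comp_comp_symm]
  exact isElemComp_of_minimal hant.1 hz hoff hon hq hqmin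

open DelGrpd in
/-- Let `F ⊆ F'` be two faces of `Z(𝒜)`, let `B` be the subspace dual to
`F`, and let `y` be a vertex of `F`.  Then `Δ^y(F') (Δ^y(F))⁻¹` is equivalent to a
concatenation of elementary `B`-segments. -/
theorem statement_15 {A : Type} [NormedAddCommGroup A] [InnerProductSpace ℝ A]
    [FiniteDimensional ℝ A] (𝒜 : RealArr A) (hsimp : Simplicial 𝒜)
    (F F' : Face 𝒜) (hle : F.le F') (y : Chamber 𝒜) (hyF : F.vert y)
    {a a' : Chamber 𝒜} (δ : Mor 𝒜 a y) (δ' : Mor 𝒜 a' y)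
    (hδ : IsGarside F δ) (hδ' : IsGarside F' δ') :
    IsElemComp 𝒜 F.B (δ'.comp δ.symm) :=
  statement_15_general 𝒜 F F' hle y δ δ' hδ hδ'
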